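/- For every m ∈ ℕ, the power series P_m ∈ ℚ⟦t⟧ has constant coefficient 1 and satisfies the differential equation t·P_m′ = m·G·P_m. -/

import Mathlib

open PowerSeries

/-! With `θ = t · d/dt`, a derivation of `ℚ⟦t⟧`, one has
`θ (1 - t^d)⁻¹ = d ((1 - t^d)⁻¹ - 1) · (1 - t^d)⁻¹`, so the logarithmic-derivative rule gives
`θ P_{m,N} = m G_N P_{m,N}` for the partial products, where
`G_N = ∑_{d ≤ N} d ((1 - t^d)⁻¹ - 1)`. The coefficient of `t^n` in `G_N` is
`∑_{d ≤ N, d ∣ n} d = σ(n)` for `1 ≤ n ≤ N`, so `t^(N+1)` divides `G - G_N`; it also divides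
`P_m - P_{m,N}`, because the factors with `d > N` are `1 mod t^(N+1)`. As `θ` preserves
divisibility by `t^(N+1)`, `θ P_m - m G P_m` is divisible by every power of `t`, hence vanishes.
-/

/-- `σ d` is the sum of the positive divisors of `d`. -/
def sigmaFun (d : ℕ) : ℕ := ∑ k ∈ Nat.divisors d, k

/-- The generating series `G = ∑_{d ≥ 1} σ(d) t^d` in `ℚ⟦t⟧`. -/
noncomputable def Gser : PowerSeries ℚ :=
  PowerSeries.mk fun d => if d = 0 then 0 else (sigmaFun d : ℚ)

/-- The partial product `∏_{d=1}^{N} (1 - t^d)^{-m}` in `ℚ⟦t⟧`. -/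
noncomputable def partialProd (m N : ℕ) : PowerSeries ℚ :=
  ∏ d ∈ Finset.Icc 1 N, ((1 - (PowerSeries.X : PowerSeries ℚ) ^ d)⁻¹) ^ m

/-- The infinite product `∏_{d ≥ 1} (1 - t^d)^{-m}`, defined coefficientwise via the
stabilizing coefficients of the partial products. -/
noncomputable def Pser (m : ℕ) : PowerSeries ℚ :=
  PowerSeries.mk fun k => PowerSeries.coeff k (partialProd m k)

theorem dvd_prod_sub_one {ι R : Type*} [CommRing R] {x : R} {s : Finset ι} {f : ι → R}
    (h : ∀ i ∈ s, x ∣ f i - 1) : x ∣ ∏ i ∈ s, f i - 1 :=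
  Finset.prod_induction f (fun a => x ∣ a - 1)
    (fun a b ha hb => by simpa [mul_sub] using dvd_add (dvd_mul_of_dvd_right hb a) ha)
    (by simp) h

namespace Derivation

variable {R A : Type*} [CommSemiring R] [CommSemiring A] [Algebra R A] (D : Derivation R A A)

theorem map_pow_of_eq_mul {f g : A} (h : D f = g * f) (m : ℕ) :
    D (f ^ m) = m * g * f ^ m := by
  rcases m with _ | m
  · simp
  · rw [leibniz_pow, h, Nat.add_sub_cancel, pow_succ]
    simp only [nsmul_eq_mul, smul_eq_mul]
    ring

theorem map_prod_of_eq_mul {ι : Type*} {s : Finset ι} {f g : ι → A}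
    (h : ∀ i ∈ s, D (f i) = g i * f i) :
    D (∏ i ∈ s, f i) = (∑ i ∈ s, g i) * ∏ i ∈ s, f i := by
  classical
  induction s using Finset.induction_on with
  | empty => simp
  | insert a s ha ih =>
    rw [Finset.prod_insert ha, Finset.sum_insert ha, leibniz, smul_eq_mul, smul_eq_mul,
      h a (Finset.mem_insert_self a s), ih fun i hi => h i (Finset.mem_insert_of_mem hi)]
    ring

end Derivation

namespace PowerSeries

theorem X_pow_dvd_X_mul_derivative {R : Type*} [CommSemiring R] {f : R⟦X⟧} {n : ℕ}
    (h : X ^ n ∣ f) : X ^ n ∣ X * d⁄dX R f := by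
  obtain ⟨g, rfl⟩ := h
  rcases n with _ | n
  · simp
  · refine ⟨(n + 1 : R⟦X⟧) * g + X * d⁄dX R g, ?_⟩
    rw [Derivation.leibniz, Derivation.leibniz_pow, derivative_X]
    simp only [smul_eq_mul, nsmul_eq_mul, Nat.add_sub_cancel]
    push_cast
    ring

theorem eq_of_forall_X_pow_dvd_sub {R : Type*} [CommRing R] {f g : R⟦X⟧}
    (h : ∀ n, X ^ (n + 1) ∣ f - g) : f = g := by
  ext n
  rw [← sub_eq_zero, ← map_sub]
  exact X_pow_dvd_iff.mp (h n) n n.lt_succ_self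

variable {k : Type*} [Field k]

theorem inv_one_sub_X_pow_eq_expand {d : ℕ} (hd : d ≠ 0) :
    (1 - X ^ d : k⟦X⟧)⁻¹ = expand d hd (mk 1) := by
  rw [eq_comm, eq_inv_iff_mul_eq_one (by simp [zero_pow hd]), ← expand_X d hd,
    ← map_one (expand d hd), ← map_sub, ← map_mul, mk_one_mul_one_sub_eq_one, map_one]

theorem coeff_inv_one_sub_X_pow {d : ℕ} (hd : d ≠ 0) (n : ℕ) :
    coeff n (1 - X ^ d : k⟦X⟧)⁻¹ = if d ∣ n then 1 else 0 := by
  rw [inv_one_sub_X_pow_eq_expand hd, coeff_expand]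
  simp

theorem X_pow_mul_inv_one_sub_X_pow {d : ℕ} (hd : d ≠ 0) :
    X ^ d * (1 - X ^ d : k⟦X⟧)⁻¹ = (1 - X ^ d)⁻¹ - 1 := by
  have := PowerSeries.mul_inv_cancel (1 - X ^ d : k⟦X⟧) (by simp [zero_pow hd])
  linear_combination -this

theorem X_pow_dvd_inv_one_sub_X_pow_sub_one (d : ℕ) :
    X ^ d ∣ (1 - X ^ d : k⟦X⟧)⁻¹ - 1 := by
  rcases eq_or_ne d 0 with rfl | hd
  · simp
  · exact ⟨_, (X_pow_mul_inv_one_sub_X_pow hd).symm⟩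

theorem X_mul_derivative_inv_one_sub_X_pow (d : ℕ) :
    X * d⁄dX k (1 - X ^ d)⁻¹
      = (d : k⟦X⟧) * ((1 - X ^ d : k⟦X⟧)⁻¹ - 1) * (1 - X ^ d)⁻¹ := by
  rcases eq_or_ne d 0 with rfl | hd
  · simp
  · rw [← X_pow_mul_inv_one_sub_X_pow hd, derivative_inv', map_sub, Derivation.map_one_eq_zero,
      Derivation.leibniz_pow, derivative_X]
    obtain ⟨e, rfl⟩ := Nat.exists_eq_add_one_of_ne_zero hd
    simp only [smul_eq_mul, nsmul_eq_mul, Nat.add_sub_cancel, mul_one, pow_succ']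
    ring

end PowerSeries

noncomputable def partialGser (N : ℕ) : ℚ⟦X⟧ :=
  ∑ d ∈ Finset.Icc 1 N, (d : ℚ⟦X⟧) * ((1 - X ^ d)⁻¹ - 1)

theorem X_mul_derivative_partialProd (m N : ℕ) :
    X * d⁄dX ℚ (partialProd m N) = (m : ℚ⟦X⟧) * partialGser N * partialProd m N := by
  have hfactor (d : ℕ) : ((X : ℚ⟦X⟧) • d⁄dX ℚ) ((1 - X ^ d : ℚ⟦X⟧)⁻¹ ^ m)
      = (m : ℚ⟦X⟧) * ((d : ℚ⟦X⟧) * ((1 - X ^ d)⁻¹ - 1)) * (1 - X ^ d)⁻¹ ^ m := by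
    rw [Derivation.map_pow_of_eq_mul _ (X_mul_derivative_inv_one_sub_X_pow d), mul_assoc]
  have := ((X : ℚ⟦X⟧) • d⁄dX ℚ).map_prod_of_eq_mul
    fun d (_ : d ∈ Finset.Icc 1 N) => hfactor d
  rwa [← Finset.mul_sum, Derivation.smul_apply, smul_eq_mul] at this

theorem coeff_partialGser {n N : ℕ} (h : n ≤ N) : coeff n (partialGser N) = coeff n Gser := by
  have hterm (d : ℕ) (hd : d ∈ Finset.Icc 1 N) :
      coeff n ((d : ℚ⟦X⟧) * ((1 - X ^ d)⁻¹ - 1))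
        = if d ∣ n ∧ n ≠ 0 then (d : ℚ) else 0 := by
    rw [← map_natCast C, coeff_C_mul, map_sub, coeff_inv_one_sub_X_pow (by grind), coeff_one]
    by_cases hn : n = 0 <;> by_cases hdn : d ∣ n <;> simp [hn, hdn]
  rw [partialGser, map_sum, Finset.sum_congr rfl hterm, ← Finset.sum_filter, Gser, coeff_mk]
  rcases eq_or_ne n 0 with rfl | hn
  · simp
  · have hdivisors : (Finset.Icc 1 N).filter (fun d => d ∣ n ∧ n ≠ 0) = n.divisors := by
      ext d
      simp only [Finset.mem_filter, Finset.mem_Icc, Nat.mem_divisors]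
      refine ⟨fun hd => hd.2, fun hd => ⟨⟨?_, ?_⟩, hd⟩⟩
      · exact Nat.pos_of_dvd_of_pos hd.1 (Nat.pos_of_ne_zero hn)
      · exact (Nat.le_of_dvd (Nat.pos_of_ne_zero hn) hd.1).trans h
    rw [hdivisors, if_neg hn, sigmaFun, Nat.cast_sum]

theorem X_pow_succ_dvd_partialProd_sub (m : ℕ) {n N : ℕ} (h : n ≤ N) :
    X ^ (n + 1) ∣ partialProd m N - partialProd m n := by
  have hsplit : partialProd m N
      = partialProd m n * ∏ d ∈ Finset.Ioc n N, ((1 - X ^ d : ℚ⟦X⟧)⁻¹) ^ m := by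
    rw [partialProd, partialProd, ← zero_add 1, Finset.Icc_add_one_left_eq_Ioc,
      Finset.Icc_add_one_left_eq_Ioc, Finset.prod_Ioc_consecutive _ n.zero_le h]
  have hfactor (d : ℕ) : X ^ d ∣ ((1 - X ^ d : ℚ⟦X⟧)⁻¹) ^ m - 1 := by
    simpa using (X_pow_dvd_inv_one_sub_X_pow_sub_one d).trans
      (sub_dvd_pow_sub_pow ((1 - X ^ d : ℚ⟦X⟧)⁻¹) 1 m)
  have htail : X ^ (n + 1) ∣ ∏ d ∈ Finset.Ioc n N, ((1 - X ^ d : ℚ⟦X⟧)⁻¹) ^ m - 1 :=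
    dvd_prod_sub_one fun d hd => (pow_dvd_pow X (Finset.mem_Ioc.1 hd).1).trans (hfactor d)
  rw [hsplit, ← mul_sub_one]
  exact htail.mul_left _

theorem X_pow_succ_dvd_Pser_sub_partialProd (m N : ℕ) :
    X ^ (N + 1) ∣ Pser m - partialProd m N :=
  X_pow_dvd_iff.2 fun n hn => by
    have hstable := X_pow_dvd_iff.1
      (X_pow_succ_dvd_partialProd_sub m (Nat.lt_succ_iff.1 hn)) n n.lt_succ_self
    rw [map_sub, sub_eq_zero] at hstable
    rw [map_sub, Pser, coeff_mk, hstable, sub_self]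

theorem X_pow_succ_dvd_Gser_sub_partialGser (N : ℕ) :
    X ^ (N + 1) ∣ Gser - partialGser N :=
  X_pow_dvd_iff.2 fun n hn => by rw [map_sub, coeff_partialGser (Nat.lt_succ_iff.1 hn), sub_self]

theorem Pser_constantCoeff_and_ODE (m : ℕ) :
    PowerSeries.constantCoeff (Pser m) = 1 ∧
      (PowerSeries.X : PowerSeries ℚ) * PowerSeries.derivative ℚ (Pser m)
        = (m : PowerSeries ℚ) * Gser * Pser m := by
  refine ⟨by simp [Pser, partialProd, ← coeff_zero_eq_constantCoeff_apply], ?_⟩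
  refine eq_of_forall_X_pow_dvd_sub fun n => ?_
  have hP := X_pow_succ_dvd_Pser_sub_partialProd m n
  have hG := X_pow_succ_dvd_Gser_sub_partialGser n
  have hdecomp : X * d⁄dX ℚ (Pser m) - (m : ℚ⟦X⟧) * Gser * Pser m
      = X * d⁄dX ℚ (Pser m - partialProd m n)
        - (m : ℚ⟦X⟧) * Pser m * (Gser - partialGser n)
        - (m : ℚ⟦X⟧) * partialGser n * (Pser m - partialProd m n) := by
    rw [map_sub, mul_sub, X_mul_derivative_partialProd]
    ring
  rw [hdecomp]
  exact dvd_sub (dvd_sub (X_pow_dvd_X_mul_derivative hP) (hG.mul_left _)) (hP.mul_left _)
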